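/- For every binary word s, the integers P^A(s) and P^B(s) are coprime and s = gen(P^A(s), P^B(s)); together with the identities P^A(gen(a,b)) = a and P^B(gen(a,b)) = b, this means gen is a bijection between pairs of coprime positive integers and binary words. -/
import Mathlib


/-- `P s` is the number of distinct subsequences of the binary word `s`
(the letter `A` is `true`, the letter `B` is `false`), including the empty one. -/
def P (s : List Bool) : ℕ := s.sublists.toFinset.card

/-- `PA s` is the number of distinct subsequences of `s` starting with `A` (= `true`),
plus one for the empty subsequence. -/
def PA (s : List Bool) : ℕ :=
  ((s.sublists.toFinset).filter (fun t => t.head? = some true)).card + 1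

/-- `PB s` is the number of distinct subsequences of `s` starting with `B` (= `false`),
plus one for the empty subsequence. -/
def PB (s : List Bool) : ℕ :=
  ((s.sublists.toFinset).filter (fun t => t.head? = some false)).card + 1

/-- `QA s` is the number of distinct subsequences of `s` ending with `A` (= `true`),
plus one for the empty subsequence. -/
def QA (s : List Bool) : ℕ :=
  ((s.sublists.toFinset).filter (fun t => t.getLast? = some true)).card + 1

/-- `QB s` is the number of distinct subsequences of `s` ending with `B` (= `false`),
plus one for the empty subsequence. -/
def QB (s : List Bool) : ℕ :=
  ((s.sublists.toFinset).filter (fun t => t.getLast? = some false)).card + 1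

/-- The word `gen a b`, defined by the Euclidean recursion:
`gen 1 1 = []`, `gen a b = A ∘ gen (a-b) b` if `a > b`, `gen a b = B ∘ gen a (b-a)` if `b > a`. -/
def gen : ℕ → ℕ → List Bool
  | 0, _ => []
  | _ + 1, 0 => []
  | a + 1, b + 1 =>
    if a > b then true :: gen (a - b) (b + 1)
    else if b > a then false :: gen (a + 1) (b - a)
    else []
termination_by a b => a + b
decreasing_by all_goals omega

/-- `star s` swaps all letters `A` and `B` in `s`. -/
def star (s : List Bool) : List Bool := s.map (fun x => !x)

/-- `z n` is the alternating word `ABAB…` of length `n`. -/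
def z : ℕ → List Bool
  | 0 => []
  | n + 1 => true :: star (z n)

lemma filt_eq_image (x : Bool) (t : List Bool) :
    ((x :: t).sublists.toFinset).filter (fun u => u.head? = some x) =
    (t.sublists.toFinset).image (x :: ·) := by
  ext u
  simp only [Finset.mem_filter, List.mem_toFinset, List.mem_sublists, Finset.mem_image]
  constructor
  · rintro ⟨hs, hh⟩
    cases u with
    | nil => simp at hh
    | cons y v =>
      simp only [List.head?_cons, Option.some.injEq] at hh
      subst hh
      exact ⟨v, List.cons_sublist_cons.mp hs, rfl⟩
  · rintro ⟨v, hv, rfl⟩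
    exact ⟨List.cons_sublist_cons.mpr hv, rfl⟩

lemma filt_other (x : Bool) (t : List Bool) :
    ((x :: t).sublists.toFinset).filter (fun u => u.head? = some (!x)) =
    (t.sublists.toFinset).filter (fun u => u.head? = some (!x)) := by
  ext u
  simp only [Finset.mem_filter, List.mem_toFinset, List.mem_sublists]
  constructor
  · rintro ⟨hs, hh⟩
    refine ⟨?_, hh⟩
    rcases List.sublist_cons_iff.mp hs with h | ⟨r, rfl, hr⟩
    · exact h
    · simp at hh
  · rintro ⟨hs, hh⟩
    exact ⟨hs.trans (List.sublist_cons_self x t), hh⟩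

lemma P_split (t : List Bool) : P t = (PA t - 1) + (PB t - 1) + 1 := by
  have h1 : (PA t - 1) + (PB t - 1) =
      ((t.sublists.toFinset).filter (fun u => u.head? = some true)).card +
      ((t.sublists.toFinset).filter (fun u => u.head? = some false)).card := by
    simp [PA, PB]
  rw [h1]
  have h2 : ((t.sublists.toFinset).filter (fun u => u.head? = some true)).card +
      ((t.sublists.toFinset).filter (fun u => ¬ (u.head? = some true))).card =
      (t.sublists.toFinset).card :=
    Finset.card_filter_add_card_filter_not _
  have h3 : (t.sublists.toFinset).filter (fun u => ¬ (u.head? = some true)) =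
      insert ([] : List Bool) ((t.sublists.toFinset).filter (fun u => u.head? = some false)) := by
    ext u
    simp only [Finset.mem_filter, Finset.mem_insert, List.mem_toFinset, List.mem_sublists]
    cases u with
    | nil => simp
    | cons y v => cases y <;> simp
  have h4 : ([] : List Bool) ∉ (t.sublists.toFinset).filter (fun u => u.head? = some false) := by
    simp
  rw [h3, Finset.card_insert_of_notMem h4] at h2
  unfold P
  omega

lemma PA_pos (s : List Bool) : 0 < PA s := Nat.succ_pos _
lemma PB_pos (s : List Bool) : 0 < PB s := Nat.succ_pos _

lemma PA_cons_true (t : List Bool) : PA (true :: t) = PA t + PB t := by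
  have := filt_eq_image true t
  have hc : (((true :: t).sublists.toFinset).filter (fun u => u.head? = some true)).card
      = P t := by
    rw [this, Finset.card_image_of_injective _ (fun a b h => by injection h)]; rfl
  unfold PA
  rw [hc, P_split t]
  have := PA_pos t; have := PB_pos t
  unfold PA PB at *
  omega

lemma PB_cons_true (t : List Bool) : PB (true :: t) = PB t := by
  have := filt_other true t
  simp only [Bool.not_true] at this
  unfold PB
  rw [this]

lemma PB_cons_false (t : List Bool) : PB (false :: t) = PA t + PB t := by
  have := filt_eq_image false t
  have hc : (((false :: t).sublists.toFinset).filter (fun u => u.head? = some false)).card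
      = P t := by
    rw [this, Finset.card_image_of_injective _ (fun a b h => by injection h)]; rfl
  unfold PB
  rw [hc, P_split t]
  have := PA_pos t; have := PB_pos t
  unfold PA PB at *
  omega

lemma PA_cons_false (t : List Bool) : PA (false :: t) = PA t := by
  have := filt_other false t
  simp only [Bool.not_false] at this
  unfold PA
  rw [this]

lemma gen_gt (a b : ℕ) (ha : 0 < a) (hb : 0 < b) : gen (a + b) b = true :: gen a b := by
  obtain ⟨a', rfl⟩ : ∃ a', a = a' + 1 := ⟨a - 1, by omega⟩
  obtain ⟨b', rfl⟩ : ∃ b', b = b' + 1 := ⟨b - 1, by omega⟩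
  have he : a' + 1 + (b' + 1) = (a' + b' + 1) + 1 := by omega
  rw [he, gen]
  have h : a' + b' + 1 > b' := by omega
  rw [if_pos h]
  congr 2
  omega

lemma gen_lt (a b : ℕ) (ha : 0 < a) (hb : 0 < b) : gen a (a + b) = false :: gen a b := by
  obtain ⟨a', rfl⟩ : ∃ a', a = a' + 1 := ⟨a - 1, by omega⟩
  obtain ⟨b', rfl⟩ : ∃ b', b = b' + 1 := ⟨b - 1, by omega⟩
  have he : a' + 1 + (b' + 1) = (a' + b' + 1) + 1 := by omega
  rw [he, gen]
  have h1 : ¬ (a' > a' + b' + 1) := by omega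
  have h2 : a' + b' + 1 > a' := by omega
  rw [if_neg h1, if_pos h2]
  congr 2
  omega

lemma PA_nil : PA [] = 1 := rfl
lemma PB_nil : PB [] = 1 := rfl

lemma gen_one_one : gen 1 1 = [] := by rw [gen]; simp

lemma main1 (s : List Bool) : Nat.Coprime (PA s) (PB s) ∧ gen (PA s) (PB s) = s := by
  induction s with
  | nil =>
    rw [PA_nil, PB_nil]
    exact ⟨Nat.coprime_one_left 1, gen_one_one⟩
  | cons x t ih =>
    obtain ⟨hcop, hgen⟩ := ih
    cases x with
    | true =>
      rw [PA_cons_true, PB_cons_true]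
      constructor
      · exact (Nat.coprime_add_self_left).mpr hcop
      · rw [gen_gt _ _ (PA_pos t) (PB_pos t), hgen]
    | false =>
      rw [PA_cons_false, PB_cons_false]
      constructor
      · unfold Nat.Coprime at *
        rw [Nat.gcd_self_add_right]
        exact hcop
      · rw [gen_lt _ _ (PA_pos t) (PB_pos t), hgen]

lemma gen_inv (n a b : ℕ) (hn : a + b ≤ n) (ha : 0 < a) (hb : 0 < b)
    (hcop : Nat.Coprime a b) : PA (gen a b) = a ∧ PB (gen a b) = b := by
  induction n generalizing a b with
  | zero => omega
  | succ n ih =>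
    rcases lt_trichotomy a b with h | h | h
    · obtain ⟨c, rfl⟩ : ∃ c, b = a + c := ⟨b - a, by omega⟩
      have hc : 0 < c := by omega
      have hcop' : Nat.Coprime a c := by
        unfold Nat.Coprime at *
        rwa [Nat.gcd_self_add_right] at hcop
      have := ih a c (by omega) ha hc hcop'
      rw [gen_lt a c ha hc, PA_cons_false, PB_cons_false]
      omega
    · have : a = 1 := by
        have := hcop
        unfold Nat.Coprime at this
        subst h
        simpa using this
      subst this; subst h
      show PA (gen 1 1) = 1 ∧ PB (gen 1 1) = 1
      rw [gen_one_one]; exact ⟨rfl, rfl⟩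
    · obtain ⟨c, rfl⟩ : ∃ c, a = c + b := ⟨a - b, by omega⟩
      have hc : 0 < c := by omega
      have hcop' : Nat.Coprime c b := by
        rwa [Nat.coprime_add_self_left] at hcop
      have := ih c b (by omega) hc hb hcop'
      rw [gen_gt c b hc hb, PA_cons_true, PB_cons_true]
      omega

/-- For every binary word `s`, the integers `P^A(s)` and `P^B(s)` are coprime and
`s = gen(P^A(s), P^B(s))`; hence `gen` is a bijection between pairs of coprime positive
integers and binary words. -/
theorem gen_bijection :
    (∀ s : List Bool, Nat.Coprime (PA s) (PB s) ∧ gen (PA s) (PB s) = s) ∧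
    Function.Bijective
      (fun p : {p : ℕ × ℕ // 0 < p.1 ∧ 0 < p.2 ∧ Nat.Coprime p.1 p.2} =>
        gen p.1.1 p.1.2) := by
  refine ⟨main1, ?_, ?_⟩
  · rintro ⟨⟨a, b⟩, ha, hb, hcop⟩ ⟨⟨a', b'⟩, ha', hb', hcop'⟩ h
    simp only at h
    have h1 := gen_inv (a + b) a b le_rfl ha hb hcop
    have h2 := gen_inv (a' + b') a' b' le_rfl ha' hb' hcop'
    apply Subtype.ext
    apply Prod.ext
    · simp only
      rw [← h1.1, ← h2.1, h]
    · simp only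
      rw [← h1.2, ← h2.2, h]
  · intro s
    exact ⟨⟨(PA s, PB s), PA_pos s, PB_pos s, (main1 s).1⟩, (main1 s).2⟩
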